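/- arXiv:2507.15611 — 2 statements merged into one kernel-verified Lean document; each statement's English description precedes it below -/
import Mathlib

section
/- In the algebra E′, the bidegree (5, 67) component E′^{5,67} is a three-dimensional F₂-vector space with basis the classes of H₁(0), h₀³h₅², and h₁D₃(0); moreover the monomial h₀h₁h₄²h₅ equals 0 in E′. (This verifies Ext_A^{5,5+62}(ℤ/2,ℤ/2) = ⟨H₁(0), h₀³h₅², h₁D₃(0)⟩.) -/
noncomputable section

open MvPolynomial

/-- Generators of Chen's algebra `E′` in homological degrees ≤ 5.
Here `g i` denotes the generator `g_{i+1}` (the family `g` starts at index 1). -/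
inductive Gen : Type
  | h (i : ℕ)
  | c (i : ℕ)
  | d (i : ℕ)
  | e (i : ℕ)
  | f (i : ℕ)
  | g (i : ℕ)
  | p (i : ℕ)
  | D3 (i : ℕ)
  | p' (i : ℕ)
  | P1h1
  | P1h2
  | n (i : ℕ)
  | x (i : ℕ)
  | D1 (i : ℕ)
  | H1 (i : ℕ)
  | Q3 (i : ℕ)
  | K (i : ℕ)
  | J (i : ℕ)
  | T (i : ℕ)
  | V (i : ℕ)
  | V' (i : ℕ)
  | U (i : ℕ)

/-- Homological degree of the generators. -/
def hdeg : Gen → ℕ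
  | .h _ => 1
  | .c _ => 3
  | .d _ => 4
  | .e _ => 4
  | .f _ => 4
  | .g _ => 4
  | .p _ => 4
  | .D3 _ => 4
  | .p' _ => 4
  | _ => 5

/-- Internal degree of the generators. -/
def ideg : Gen → ℕ
  | .h i => 2 ^ i
  | .c i => 2 ^ (i + 3) + 2 ^ (i + 1) + 2 ^ i
  | .d i => 2 ^ (i + 4) + 2 ^ (i + 1)
  | .e i => 2 ^ (i + 4) + 2 ^ (i + 2) + 2 ^ i
  | .f i => 2 ^ (i + 4) + 2 ^ (i + 2) + 2 ^ (i + 1)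
  | .g i => 2 ^ (i + 4) + 2 ^ (i + 3)      -- internal degree of `g_{i+1}`
  | .p i => 2 ^ (i + 5) + 2 ^ (i + 2) + 2 ^ i
  | .D3 i => 2 ^ (i + 6) + 2 ^ i
  | .p' i => 2 ^ (i + 6) + 2 ^ (i + 3) + 2 ^ i
  | .P1h1 => 14
  | .P1h2 => 16
  | .n i => 2 ^ (i + 5) + 2 ^ (i + 2)
  | .x i => 2 ^ (i + 5) + 2 ^ (i + 3) + 2 ^ (i + 1)
  | .D1 i => 2 ^ (i + 5) + 2 ^ (i + 4) + 2 ^ (i + 2) + 2 ^ i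
  | .H1 i => 2 ^ (i + 6) + 2 ^ (i + 1) + 2 ^ i
  | .Q3 i => 2 ^ (i + 6) + 2 ^ (i + 3)
  | .K i => 2 ^ (i + 7) + 2 ^ (i + 1)
  | .J i => 2 ^ (i + 7) + 2 ^ (i + 2) + 2 ^ i
  | .T i => 2 ^ (i + 7) + 2 ^ (i + 4) + 2 ^ (i + 1)
  | .V i => 2 ^ (i + 7) + 2 ^ (i + 5) + 2 ^ i
  | .V' i => 2 ^ (i + 8) + 2 ^ i
  | .U i => 2 ^ (i + 8) + 2 ^ (i + 3) + 2 ^ i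

abbrev P := MvPolynomial Gen (ZMod 2)

/-- Chen's relations in homological degrees ≤ 5: the relations
`hᵢhᵢ₊₁ = 0`, `hᵢhᵢ₊₂² = 0`, `hᵢ²hᵢ₊₃² = 0`, `hᵢ³ = hᵢ₋₁²hᵢ₊₁` (i ≥ 1),
`hⱼcᵢ = 0` for `j ∈ {i-1, i, i+2, i+3}`, together with Chen's 39 families of
degree-5 relations (with `g j` standing for `g_{j+1}`). -/
def rels : Set P :=
  ⋃ j : ℕ,
    ({ X (Gen.h j) * X (Gen.h (j + 1)),
       X (Gen.h j) * X (Gen.h (j + 2)) ^ 2,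
       X (Gen.h j) ^ 2 * X (Gen.h (j + 3)) ^ 2,
       X (Gen.h (j + 1)) ^ 3 - X (Gen.h j) ^ 2 * X (Gen.h (j + 2)),
       X (Gen.h j) * X (Gen.c (j + 1)),
       X (Gen.h j) * X (Gen.c j),
       X (Gen.h (j + 2)) * X (Gen.c j),
       X (Gen.h (j + 3)) * X (Gen.c j),
       -- Chen's degree-5 relations:
       X (Gen.h (j + 4)) ^ 2 * X (Gen.c j),
       X (Gen.h (j + 3)) * X (Gen.h j) * X (Gen.c (j + 2)),
       X (Gen.h (j + 1)) ^ 2 * X (Gen.c j),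
       X (Gen.h j) * X (Gen.d (j + 1)),
       X (Gen.h (j + 3)) * X (Gen.d j),
       X (Gen.h (j + 4)) * X (Gen.d j),
       X (Gen.h j) * X (Gen.e (j + 1)),
       X (Gen.h (j + 4)) * X (Gen.e j),
       X (Gen.h (j + 1)) * X (Gen.f j),
       X (Gen.h (j + 3)) * X (Gen.f j),
       X (Gen.h (j + 4)) * X (Gen.f j),
       X (Gen.h (j + 3)) * X (Gen.g j),
       X (Gen.h j) * X (Gen.p (j + 1)),
       X (Gen.h (j + 1)) * X (Gen.p j),
       X (Gen.h (j + 2)) * X (Gen.p j),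
       X (Gen.h (j + 4)) * X (Gen.p j),
       X (Gen.h (j + 5)) * X (Gen.p j),
       X (Gen.h j) * X (Gen.D3 (j + 1)),
       X (Gen.h j) * X (Gen.D3 j),
       X (Gen.h (j + 5)) * X (Gen.D3 j),
       X (Gen.h (j + 6)) * X (Gen.D3 j),
       X (Gen.h j) * X (Gen.p' (j + 1)),
       X (Gen.h (j + 2)) * X (Gen.p' j),
       X (Gen.h (j + 3)) * X (Gen.p' j),
       X (Gen.h (j + 6)) * X (Gen.p' j),
       X (Gen.h (j + 4)) * X (Gen.h (j + 1)) * X (Gen.c j) - X (Gen.h (j + 3)) * X (Gen.e j),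
       X (Gen.h (j + 4)) * X (Gen.h j) * X (Gen.c (j + 3)) - X (Gen.h (j + 5)) * X (Gen.p' j),
       X (Gen.h (j + 5)) ^ 2 * X (Gen.c j) - X (Gen.h (j + 1)) * X (Gen.p' j),
       X (Gen.h j) * X (Gen.d (j + 2)) - X (Gen.h (j + 3)) * X (Gen.D3 j),
       X (Gen.h (j + 1)) * X (Gen.d (j + 1)) - X (Gen.h j) * X (Gen.p j),
       X (Gen.h (j + 2)) * X (Gen.d (j + 1)) - X (Gen.h (j + 4)) * X (Gen.g j),
       X (Gen.h (j + 2)) * X (Gen.d j) - X (Gen.h j) * X (Gen.e j),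
       X (Gen.h (j + 1)) * X (Gen.e j) - X (Gen.h j) * X (Gen.f j),
       X (Gen.h (j + 2)) * X (Gen.e (j + 1)) - X (Gen.h j) ^ 2 * X (Gen.c (j + 2)),
       X (Gen.h (j + 2)) * X (Gen.e j) - X (Gen.h j) * X (Gen.g j),
       X (Gen.h j) * X (Gen.f (j + 2)) - X (Gen.h (j + 4)) * X (Gen.p' j),
       X (Gen.h j) * X (Gen.f (j + 1)) - X (Gen.h (j + 3)) * X (Gen.p j),
       X (Gen.h (j + 2)) * X (Gen.f j) - X (Gen.h (j + 1)) * X (Gen.g j),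
       X (Gen.h (j + 3)) * X (Gen.g (j + 1)) - X (Gen.h (j + 5)) * X (Gen.g j) } : Set P)

def relIdeal : Ideal P := Ideal.span rels

/-- Chen's algebra `E′`, isomorphic to `Ext_A^{k,*}(ℤ/2, ℤ/2)` in homological degrees `k ≤ 5`. -/
abbrev E' := P ⧸ relIdeal

def mkE : P →ₐ[ZMod 2] E' := Ideal.Quotient.mkₐ (ZMod 2) relIdeal

/-- The bidegree `(k, d)` component `E′^{k,d}` of `E′`: the image of the space of polynomials
that are weighted homogeneous of homological degree `k` and internal degree `d`. -/
def component (k d : ℕ) : Submodule (ZMod 2) E' :=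
  Submodule.map mkE.toLinearMap
    (weightedHomogeneousSubmodule (ZMod 2) hdeg k ⊓
      weightedHomogeneousSubmodule (ZMod 2) ideg d)

/-!
Every generator of `E′` other than the `hᵢ` has homological degree at least 3, so a monomial of
bidegree `(5, 67)` is either a product of five `hᵢ`, or one other generator times at most two
`hᵢ`. As `67 < 2⁷`, only indices below 7 can occur, and a finite check leaves exactly `H₁(0)`,
`h₁D₃(0)`, `h₀³h₅²` and `h₀h₁h₄²h₅`; the last one vanishes because `h₀h₁ = 0`.

The three surviving classes are separated by algebra maps `E′ → 𝔽₂[θ]/(θ³)` sending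
`H₁(0) ↦ θ²`, resp. `h₀ ↦ 1, h₅ ↦ θ`, resp. `h₁, D₃(0) ↦ θ`, and all other generators to `0`.
Nilpotence of `θ` is what makes them compatible with `h₅³ = h₄²h₆` and `h₁³ = h₀²h₂`; each map
sends one of the three classes to `θ² ≠ 0` and the other two to `0`.
-/

deriving instance DecidableEq for Gen

theorem linearIndependent_of_separating {R M N ι : Type*} [Ring R] [AddCommGroup M] [Module R M]
    [AddCommGroup N] [Module R N] [NoZeroSMulDivisors R N] {v : ι → M} (φ : ι → M →ₗ[R] N)
    (hdiag : ∀ i, φ i (v i) ≠ 0) (hoff : ∀ i j, i ≠ j → φ i (v j) = 0) :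
    LinearIndependent R v := by
  rw [linearIndependent_iff']
  intro s c hsum i hi
  have hφ := congrArg (φ i) hsum
  simp only [map_sum, map_smul, map_zero] at hφ
  rw [Finset.sum_eq_single_of_mem i hi fun j _ hji => by rw [hoff i j hji.symm, smul_zero]] at hφ
  exact (eq_zero_or_eq_zero_of_smul_eq_zero hφ).resolve_right (hdiag i)

namespace AdjoinRoot

variable {R : Type*} [CommRing R]

theorem root_X_pow_pow_self (n : ℕ) : root (Polynomial.X ^ n : Polynomial R) ^ n = 0 := by
  rw [← mk_X, ← map_pow, mk_self]

theorem root_X_pow_pow_ne_zero [Nontrivial R] {m n : ℕ} (h : m < n) :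
    root (Polynomial.X ^ n : Polynomial R) ^ m ≠ 0 := by
  rw [← mk_X, ← map_pow, Ne, mk_eq_zero, Polynomial.X_pow_dvd_iff]
  intro hcoeff
  simpa using hcoeff m h

end AdjoinRoot

theorem Finsupp.weight_toFinsupp {σ M : Type*} [AddCommMonoid M] [DecidableEq σ] (w : σ → M)
    (s : Multiset σ) : Finsupp.weight w (Multiset.toFinsupp s) = (s.map w).sum := by
  induction s using Multiset.induction with
  | empty => simp
  | cons a s ih =>
    rw [Multiset.map_cons, Multiset.sum_cons, ← Multiset.singleton_add, Multiset.toFinsupp_add,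
      map_add, ih, Multiset.toFinsupp_singleton, Finsupp.weight_single, one_smul]

namespace MvPolynomial

variable {R σ M : Type*} [CommSemiring R] [AddCommMonoid M]

theorem prod_map_X_eq_monomial [DecidableEq σ] (s : Multiset σ) :
    (s.map X).prod = (monomial (Multiset.toFinsupp s) 1 : MvPolynomial σ R) := by
  induction s using Multiset.induction with
  | empty => simp
  | cons a s ih =>
    rw [Multiset.map_cons, Multiset.prod_cons, ih, ← Multiset.singleton_add,
      Multiset.toFinsupp_add, Multiset.toFinsupp_singleton, X, monomial_mul, one_mul]

theorem weightedHomogeneousSubmodule_inf_eq_span (w₁ w₂ : σ → M) (m₁ m₂ : M) :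
    weightedHomogeneousSubmodule R w₁ m₁ ⊓ weightedHomogeneousSubmodule R w₂ m₂ =
      Submodule.span R ((fun s : Multiset σ => (s.map X).prod) ''
        {s | (s.map w₁).sum = m₁ ∧ (s.map w₂).sum = m₂}) := by
  classical
  have hinf : weightedHomogeneousSubmodule R w₁ m₁ ⊓ weightedHomogeneousSubmodule R w₂ m₂ =
      restrictSupport R {d | Finsupp.weight w₁ d = m₁ ∧ Finsupp.weight w₂ d = m₂} := by
    ext p
    simp only [Submodule.mem_inf, mem_weightedHomogeneousSubmodule, IsWeightedHomogeneous,
      mem_restrictSupport_iff, Set.subset_def, Finset.mem_coe, mem_support_iff]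
    exact ⟨fun h d hd => ⟨h.1 hd, h.2 hd⟩,
      fun h => ⟨fun d hd => (h d hd).1, fun d hd => (h d hd).2⟩⟩
  rw [hinf, restrictSupport_eq_span]
  congr 1
  ext p
  constructor
  · rintro ⟨d, hd, rfl⟩
    refine ⟨Finsupp.toMultiset d, ?_, ?_⟩
    · simpa only [Set.mem_ofPred_eq, ← Finsupp.weight_toFinsupp, Finsupp.toMultiset_toFinsupp]
        using hd
    · simp only [prod_map_X_eq_monomial, Finsupp.toMultiset_toFinsupp]
  · rintro ⟨s, hs, rfl⟩
    refine ⟨Multiset.toFinsupp s, ?_, (prod_map_X_eq_monomial s).symm⟩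
    simpa only [Set.mem_ofPred_eq, Finsupp.weight_toFinsupp] using hs

end MvPolynomial

theorem component_eq_span (k d : ℕ) :
    component k d = Submodule.span (ZMod 2) ((fun s : Multiset Gen => mkE (s.map X).prod) ''
      {s | (s.map hdeg).sum = k ∧ (s.map ideg).sum = d}) := by
  rw [component, weightedHomogeneousSubmodule_inf_eq_span, Submodule.map_span, Set.image_image]
  rfl

theorem mkE_h_mul_h_succ (i : ℕ) : mkE (X (Gen.h i) * X (Gen.h (i + 1))) = 0 :=
  Ideal.Quotient.eq_zero_iff_mem.mpr
    (Ideal.subset_span (Set.mem_iUnion.mpr ⟨i, Set.mem_insert _ _⟩))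

theorem hdeg_eq_one_or_three_le (g : Gen) : hdeg g = 1 ∨ 3 ≤ hdeg g := by
  cases g <;> simp [hdeg]

instance : CanLift Gen ℕ Gen.h (fun g => hdeg g = 1) where
  prf g hg := by cases g <;> simp_all [hdeg]

theorem sum_map_hdeg_map_h (s : Multiset ℕ) : ((s.map Gen.h).map hdeg).sum = Multiset.card s := by
  simp [Multiset.map_map, Function.comp_def, hdeg]

theorem sum_map_ideg_map_h (s : Multiset ℕ) :
    ((s.map Gen.h).map ideg).sum = (s.map (2 ^ ·)).sum := by
  simp only [Multiset.map_map, Function.comp_def, ideg]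

def nonHGens (N : ℕ) : List Gen :=
  [.P1h1, .P1h2] ++ (List.range N).flatMap fun i =>
    [.c i, .d i, .e i, .f i, .g i, .p i, .D3 i, .p' i, .n i, .x i, .D1 i, .H1 i, .Q3 i, .K i,
      .J i, .T i, .V i, .V' i, .U i]

theorem mem_nonHGens {g : Gen} {N : ℕ} (hg : hdeg g ≠ 1) (hN : ideg g < 2 ^ N) :
    g ∈ nonHGens N := by
  -- a generator of index `i` has internal degree at least `2 ^ i`
  cases g <;> simp only [hdeg, ideg] at hg hN <;> simp [nonHGens] at hg ⊢ <;>
    exact (Nat.pow_lt_pow_iff_right (by norm_num : 1 < 2)).mp (by ring_nf at hN; omega)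

theorem nonHGens_seven_cases : ∀ g ∈ nonHGens 7,
    (hdeg g = 3 → ∀ a b : Fin 7, ideg g + 2 ^ (a : ℕ) + 2 ^ (b : ℕ) ≠ 67) ∧
    (hdeg g = 4 → ∀ a : Fin 7, ideg g + 2 ^ (a : ℕ) = 67 → g = .D3 0 ∧ (a : ℕ) = 1) ∧
    (hdeg g = 5 → ideg g = 67 → g = .H1 0) := by
  set_option maxRecDepth 4000 in decide

theorem fin_seven_two_pow_sum_eq_sixtySeven : ∀ a b c d e : Fin 7,
    2 ^ (a : ℕ) + 2 ^ (b : ℕ) + 2 ^ (c : ℕ) + 2 ^ (d : ℕ) + 2 ^ (e : ℕ) = 67 →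
    ({a.val, b.val, c.val, d.val, e.val} : Multiset ℕ) = {0, 0, 0, 5, 5} ∨
    ({a.val, b.val, c.val, d.val, e.val} : Multiset ℕ) = {0, 1, 4, 4, 5} := by
  decide

theorem eq_of_two_pow_sum_eq_sixtySeven {s : Multiset ℕ} (hs : Multiset.card s = 5)
    (hlt : ∀ a ∈ s, a < 7) (h : (s.map (2 ^ ·)).sum = 67) :
    s = {0, 0, 0, 5, 5} ∨ s = {0, 1, 4, 4, 5} := by
  obtain ⟨a, t, rfl, ht⟩ := Multiset.card_eq_succ_iff.mp hs
  obtain ⟨b, c, d, e, rfl⟩ := Multiset.card_eq_four.mp ht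
  simp only [Multiset.insert_eq_cons, Multiset.mem_cons, Multiset.mem_singleton,
    forall_eq_or_imp, forall_eq] at hlt
  obtain ⟨ha, hb, hc, hd, he⟩ := hlt
  simp only [Multiset.insert_eq_cons, Multiset.map_cons, Multiset.sum_cons, Multiset.map_singleton,
    Multiset.sum_singleton, ← add_assoc] at h
  exact fin_seven_two_pow_sum_eq_sixtySeven ⟨a, ha⟩ ⟨b, hb⟩ ⟨c, hc⟩ ⟨d, hd⟩ ⟨e, he⟩ h

theorem eq_of_nonHGens_cons {g : Gen} {s : Multiset ℕ} (hg : g ∈ nonHGens 7) (hg3 : 3 ≤ hdeg g)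
    (hlt : ∀ a ∈ s, a < 7) (h5 : hdeg g + Multiset.card s = 5)
    (h67 : ideg g + (s.map (2 ^ ·)).sum = 67) :
    (g = .H1 0 ∧ s = 0) ∨ (g = .D3 0 ∧ s = {1}) := by
  obtain ⟨hdeg3, hdeg4, hdeg5⟩ := nonHGens_seven_cases g hg
  obtain hs | hs | hs : Multiset.card s = 0 ∨ Multiset.card s = 1 ∨ Multiset.card s = 2 := by
    omega
  · rw [Multiset.card_eq_zero] at hs
    subst hs
    exact Or.inl ⟨hdeg5 (by simpa using h5) (by simpa using h67), rfl⟩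
  · obtain ⟨a, rfl⟩ := Multiset.card_eq_one.mp hs
    simp only [Multiset.map_singleton, Multiset.sum_singleton] at h67
    obtain ⟨rfl, ha⟩ := hdeg4 (by simp at h5; omega) ⟨a, hlt a (Multiset.mem_singleton_self a)⟩ h67
    exact Or.inr ⟨rfl, by simp [show a = 1 from ha]⟩
  · obtain ⟨a, b, rfl⟩ := Multiset.card_eq_two.mp hs
    simp only [Multiset.insert_eq_cons, Multiset.mem_cons, Multiset.mem_singleton,
      forall_eq_or_imp, forall_eq] at hlt
    simp only [Multiset.insert_eq_cons, Multiset.map_cons, Multiset.sum_cons,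
      Multiset.map_singleton, Multiset.sum_singleton, ← add_assoc] at h67
    exact absurd h67 (hdeg3 (by simp at h5; omega) ⟨a, hlt.1⟩ ⟨b, hlt.2⟩)

theorem eq_of_bidegree_five_sixtySeven (m : Multiset Gen) (h5 : (m.map hdeg).sum = 5)
    (h67 : (m.map ideg).sum = 67) :
    m = {.H1 0} ∨ m = {.h 1, .D3 0} ∨ m = ({0, 0, 0, 5, 5} : Multiset ℕ).map .h ∨
      m = ({0, 1, 4, 4, 5} : Multiset ℕ).map .h := by
  have hbound : ∀ g ∈ m, ideg g < 2 ^ 7 := fun g hg =>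
    (Multiset.le_sum_of_mem (Multiset.mem_map_of_mem ideg hg)).trans_lt (by omega)
  by_cases hall : ∀ g ∈ m, hdeg g = 1
  · lift m to Multiset ℕ using hall
    have hlt : ∀ a ∈ m, a < 7 := fun a ha =>
      (Nat.pow_lt_pow_iff_right (by norm_num : 1 < 2)).mp (hbound _ (Multiset.mem_map_of_mem _ ha))
    rw [sum_map_hdeg_map_h] at h5
    rw [sum_map_ideg_map_h] at h67
    rcases eq_of_two_pow_sum_eq_sixtySeven h5 hlt h67 with rfl | rfl
    · exact Or.inr (Or.inr (Or.inl rfl))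
    · exact Or.inr (Or.inr (Or.inr rfl))
  · obtain ⟨g, hg, hg1⟩ := not_forall₂.mp hall
    obtain ⟨t, rfl⟩ := Multiset.exists_cons_of_mem hg
    have hgN := mem_nonHGens hg1 (hbound g hg)
    have hg3 := (hdeg_eq_one_or_three_le g).resolve_left hg1
    simp only [Multiset.map_cons, Multiset.sum_cons] at h5 h67
    have ht : ∀ x ∈ t, hdeg x = 1 := fun x hx => (hdeg_eq_one_or_three_le x).resolve_right
      fun _ => by have := Multiset.le_sum_of_mem (Multiset.mem_map_of_mem hdeg hx); omega
    lift t to Multiset ℕ using ht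
    have hlt : ∀ a ∈ t, a < 7 := fun a ha =>
      (Nat.pow_lt_pow_iff_right (by norm_num : 1 < 2)).mp
        (hbound _ (Multiset.mem_cons_of_mem (Multiset.mem_map_of_mem _ ha)))
    rw [sum_map_hdeg_map_h] at h5
    rw [sum_map_ideg_map_h] at h67
    rcases eq_of_nonHGens_cons hgN hg3 hlt h5 h67 with ⟨rfl, rfl⟩ | ⟨rfl, rfl⟩
    · exact Or.inl rfl
    · exact Or.inr (Or.inl (Multiset.pair_comm _ _))

theorem mkE_h0_h1_h4_sq_h5 :
    mkE (X (Gen.h 0) * X (Gen.h 1) * X (Gen.h 4) ^ 2 * X (Gen.h 5)) = 0 := by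
  rw [mul_assoc (_ * _), map_mul, mkE_h_mul_h_succ, zero_mul]

theorem mkE_prod_map_X_of_bidegree_five_sixtySeven (m : Multiset Gen)
    (h5 : (m.map hdeg).sum = 5) (h67 : (m.map ideg).sum = 67) :
    mkE (m.map X).prod ∈ ({0, mkE (X (Gen.H1 0)), mkE (X (Gen.h 0) ^ 3 * X (Gen.h 5) ^ 2),
      mkE (X (Gen.h 1) * X (Gen.D3 0))} : Set E') := by
  rcases eq_of_bidegree_five_sixtySeven m h5 h67 with rfl | rfl | rfl | rfl
  · simp
  · simp
  · rw [show ((({0, 0, 0, 5, 5} : Multiset ℕ).map Gen.h).map X).prod =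
      (X (Gen.h 0) ^ 3 * X (Gen.h 5) ^ 2 : P) by simp; ring]
    simp
  · rw [show ((({0, 1, 4, 4, 5} : Multiset ℕ).map Gen.h).map X).prod =
      (X (Gen.h 0) * X (Gen.h 1) * X (Gen.h 4) ^ 2 * X (Gen.h 5) : P) by simp; ring,
      mkE_h0_h1_h4_sq_h5]
    simp

section Detection

abbrev TruncPoly := AdjoinRoot (Polynomial.X ^ 3 : Polynomial (ZMod 2))

local notation "θ" => AdjoinRoot.root (Polynomial.X ^ 3 : Polynomial (ZMod 2))

def liftE {A : Type*} [CommRing A] [Algebra (ZMod 2) A] (ν : Gen → A)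
    (hν : rels ⊆ (RingHom.ker (aeval ν : P →ₐ[ZMod 2] A) : Set P)) : E' →ₐ[ZMod 2] A :=
  Ideal.Quotient.liftₐ relIdeal (aeval ν) fun _ ha => Ideal.span_le.mpr hν ha

theorem liftE_mkE {A : Type*} [CommRing A] [Algebra (ZMod 2) A] (ν : Gen → A)
    (hν : rels ⊆ (RingHom.ker (aeval ν : P →ₐ[ZMod 2] A) : Set P)) (p : P) :
    liftE ν hν (mkE p) = aeval ν p :=
  rfl

def detectH1 : Gen → TruncPoly := fun g => if g = .H1 0 then θ ^ 2 else 0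

def detectH0H5 : Gen → TruncPoly := fun g => if g = .h 0 then 1 else if g = .h 5 then θ else 0

def detectH1D3 : Gen → TruncPoly := fun g => if g = .h 1 ∨ g = .D3 0 then θ else 0

theorem rels_subset_ker_detectH1 :
    rels ⊆ (RingHom.ker (aeval detectH1 : P →ₐ[ZMod 2] TruncPoly) : Set P) := by
  simp only [rels, Set.iUnion_subset_iff, Set.insert_subset_iff, Set.singleton_subset_iff,
    SetLike.mem_coe, RingHom.mem_ker, map_mul, map_sub, map_pow, aeval_X]
  intro j
  simp [detectH1]

theorem rels_subset_ker_detectH0H5 :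
    rels ⊆ (RingHom.ker (aeval detectH0H5 : P →ₐ[ZMod 2] TruncPoly) : Set P) := by
  simp only [rels, Set.iUnion_subset_iff, Set.insert_subset_iff, Set.singleton_subset_iff,
    SetLike.mem_coe, RingHom.mem_ker, map_mul, map_sub, map_pow, aeval_X]
  intro j
  rcases j with _ | _ | _ | _ | _ | _ | j <;>
    simp [detectH0H5, AdjoinRoot.root_X_pow_pow_self]

theorem rels_subset_ker_detectH1D3 :
    rels ⊆ (RingHom.ker (aeval detectH1D3 : P →ₐ[ZMod 2] TruncPoly) : Set P) := by
  simp only [rels, Set.iUnion_subset_iff, Set.insert_subset_iff, Set.singleton_subset_iff,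
    SetLike.mem_coe, RingHom.mem_ker, map_mul, map_sub, map_pow, aeval_X]
  intro j
  rcases j with _ | _ | j <;> simp [detectH1D3, AdjoinRoot.root_X_pow_pow_self]

theorem linearIndependent_H1_h0h5_h1D3 : LinearIndependent (ZMod 2)
    ![mkE (X (Gen.H1 0)), mkE (X (Gen.h 0) ^ 3 * X (Gen.h 5) ^ 2),
      mkE (X (Gen.h 1) * X (Gen.D3 0))] := by
  refine linearIndependent_of_separating
    ![(liftE detectH1 rels_subset_ker_detectH1).toLinearMap,
      (liftE detectH0H5 rels_subset_ker_detectH0H5).toLinearMap,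
      (liftE detectH1D3 rels_subset_ker_detectH1D3).toLinearMap] ?_ ?_
  · intro i
    fin_cases i <;>
      simp [liftE_mkE, detectH1, detectH0H5, detectH1D3, ← sq, AdjoinRoot.root_X_pow_pow_ne_zero]
  · intro i j hij
    fin_cases i <;> fin_cases j <;> simp_all [liftE_mkE, detectH1, detectH0H5, detectH1D3]

end Detection

/-- `E′^{5,67}` is three-dimensional over `F₂` with basis the classes of `H₁(0)`, `h₀³h₅²`
and `h₁D₃(0)` (which are in particular linearly independent), while `h₀h₁h₄²h₅ = 0` in `E′`. -/
theorem stmt9 :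
    component 5 67 = Submodule.span (ZMod 2)
        {mkE (X (Gen.H1 0)),
         mkE (X (Gen.h 0) ^ 3 * X (Gen.h 5) ^ 2),
         mkE (X (Gen.h 1) * X (Gen.D3 0))} ∧
      LinearIndependent (ZMod 2)
        ![mkE (X (Gen.H1 0)),
          mkE (X (Gen.h 0) ^ 3 * X (Gen.h 5) ^ 2),
          mkE (X (Gen.h 1) * X (Gen.D3 0))] ∧
      mkE (X (Gen.h 0) * X (Gen.h 1) * X (Gen.h 4) ^ 2 * X (Gen.h 5)) = 0 := by
  refine ⟨le_antisymm ?_ ?_, linearIndependent_H1_h0h5_h1D3, mkE_h0_h1_h4_sq_h5⟩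
  · rw [component_eq_span, Submodule.span_le, ← Submodule.span_insert_zero]
    rintro _ ⟨m, ⟨h5, h67⟩, rfl⟩
    exact Submodule.subset_span (mkE_prod_map_X_of_bidegree_five_sixtySeven m h5 h67)
  · rw [component_eq_span, Submodule.span_le]
    rintro _ (rfl | rfl | rfl)
    · exact Submodule.subset_span ⟨{.H1 0}, ⟨rfl, rfl⟩, by simp⟩
    · exact Submodule.subset_span
        ⟨({0, 0, 0, 5, 5} : Multiset ℕ).map .h, ⟨rfl, rfl⟩, by simp; ring_nf⟩
    · exact Submodule.subset_span ⟨{.h 1, .D3 0}, ⟨rfl, rfl⟩, by simp⟩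
end
end

section
/- In the algebra E′, the bidegree (5, 133) component E′^{5,133} is a one-dimensional F₂-vector space with basis the class of J₀; moreover the monomials h₀³h₁h₇, h₀h₁²h₆², and h₀h₂h₅²h₆ all equal 0 in E′. (This verifies Ext_A^{5,5+128}(ℤ/2,ℤ/2) = ⟨J₀⟩.) -/
noncomputable section

open MvPolynomial

/-!
A monomial of bidegree `(5, 133)` is a product of generators whose homological degrees (each
`1`, `3`, `4` or `5`) add up to `5`: a single generator of degree `5`, `hᵢ` times a generator of
degree `4`, `hᵢhⱼcₖ`, or a product of five `hᵢ`. Comparing internal degrees with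
`133 = 2⁷ + 2² + 2⁰`, the first shape forces `J₀` and the middle two are impossible, while five
powers of two adding up to `133` always include two consecutive ones, so the last shape is killed
by a relation `hᵢhᵢ₊₁ = 0`. Every relation lies in the ideal generated by the `hᵢ`, so evaluating
the `hᵢ` at `0` and all other generators at `1` shows `J₀ ≠ 0`.
-/

theorem Finsupp.weight_eq_sum_map_toMultiset {σ M : Type*} [AddCommMonoid M] (w : σ → M)
    (s : σ →₀ ℕ) : Finsupp.weight w s = (s.toMultiset.map w).sum := by
  rw [Finsupp.toMultiset_map, Finsupp.sum_toMultiset,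
    Finsupp.sum_mapDomain_index (h := fun a n ↦ n • a) (fun _ ↦ zero_smul _ _)
      (fun _ _ _ ↦ add_smul _ _ _)]
  rfl

theorem MvPolynomial.monomial_one_eq_prod_map_X {σ R : Type*} [CommSemiring R] (s : σ →₀ ℕ) :
    (monomial s 1 : MvPolynomial σ R) = (s.toMultiset.map X).prod := by
  rw [Finsupp.toMultiset_map, Finsupp.prod_toMultiset,
    Finsupp.prod_mapDomain_index (fun _ ↦ pow_zero _) (fun _ _ _ ↦ pow_add _ _ _), monomial_eq,
    C_1, one_mul]

theorem List.mul_dvd_prod_map_of_mem {ι M : Type*} [CommMonoid M] (f : ι → M) {a b : ι}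
    {l : List ι} (hab : a ≠ b) (ha : a ∈ l) (hb : b ∈ l) : f a * f b ∣ (l.map f).prod := by
  obtain ⟨l', hperm, hsub⟩ := List.Nodup.subperm (l₁ := [a, b]) (l₂ := l) (by simp [hab])
    (by simp [ha, hb])
  simpa [(hperm.map f).prod_eq] using (hsub.map f).prod_dvd_prod

lemma lt_eight_of_two_pow_le_133 {a : ℕ} (h : 2 ^ a ≤ 133) : a < 8 :=
  (Nat.pow_lt_pow_iff_right (by norm_num)).1 (h.trans_lt (by norm_num))

lemma exists_succ_mem_of_two_pow_sum_eq_133 {a b c d e : ℕ}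
    (h : 2 ^ a + 2 ^ b + 2 ^ c + 2 ^ d + 2 ^ e = 133) :
    ∃ i ∈ [a, b, c, d, e], i + 1 ∈ [a, b, c, d, e] := by
  have key : ∀ a b c d e : Fin 8, 2 ^ (a : ℕ) + 2 ^ (b : ℕ) + 2 ^ (c : ℕ) + 2 ^ (d : ℕ) +
      2 ^ (e : ℕ) = 133 → ∃ i ∈ [(a : ℕ), b, c, d, e], i + 1 ∈ [(a : ℕ), b, c, d, e] := by
    decide
  have := Nat.two_pow_pos a
  have := Nat.two_pow_pos b
  have := Nat.two_pow_pos c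
  have := Nat.two_pow_pos d
  have := Nat.two_pow_pos e
  exact key ⟨a, lt_eight_of_two_pow_le_133 (by omega)⟩ ⟨b, lt_eight_of_two_pow_le_133 (by omega)⟩
    ⟨c, lt_eight_of_two_pow_le_133 (by omega)⟩ ⟨d, lt_eight_of_two_pow_le_133 (by omega)⟩
    ⟨e, lt_eight_of_two_pow_le_133 (by omega)⟩ h

namespace Gen

@[simp] lemma ideg_h (i : ℕ) : ideg (h i) = 2 ^ i := rfl

lemma hdeg_eq_one_or_three_or_four_or_five (g : Gen) :
    hdeg g = 1 ∨ hdeg g = 3 ∨ hdeg g = 4 ∨ hdeg g = 5 := by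
  cases g <;> simp [hdeg]

lemma one_le_hdeg (g : Gen) : 1 ≤ hdeg g := by
  cases g <;> simp [hdeg]

lemma hdeg_eq_one_iff {g : Gen} : hdeg g = 1 ↔ ∃ i, g = h i := by
  cases g <;> simp [hdeg]

lemma hdeg_eq_three_iff {g : Gen} : hdeg g = 3 ↔ ∃ i, g = c i := by
  cases g <;> simp [hdeg]

lemma hdeg_eq_four_iff {g : Gen} : hdeg g = 4 ↔
    ∃ i, g = d i ∨ g = e i ∨ g = f i ∨ g = Gen.g i ∨ g = p i ∨ g = D3 i ∨ g = p' i := by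
  cases g <;> simp [hdeg]

lemma eq_J_zero_of_hdeg_eq_five {g : Gen} (hg : hdeg g = 5) (h133 : ideg g = 133) : g = J 0 := by
  cases g <;> simp only [hdeg] at hg <;> simp only [ideg, pow_add, Nat.reducePow] at h133
  case J i =>
    have : 2 ^ i = 1 := by omega
    simpa using this
  all_goals omega

lemma two_pow_add_ideg_ne_133 {g : Gen} (hg : hdeg g = 4) (i : ℕ) : 2 ^ i + ideg g ≠ 133 := by
  intro h133
  have := Nat.two_pow_pos i
  have hi := lt_eight_of_two_pow_le_133 (h133 ▸ Nat.le_add_right _ _)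
  obtain ⟨j, rfl | rfl | rfl | rfl | rfl | rfl | rfl⟩ := hdeg_eq_four_iff.1 hg <;>
    simp only [ideg, pow_add, Nat.reducePow] at h133 <;>
    · have hj : j < 8 := lt_eight_of_two_pow_le_133 (by omega)
      interval_cases i <;> interval_cases j <;> omega

lemma two_pow_add_two_pow_add_ideg_c_ne_133 (i j k : ℕ) : 2 ^ i + 2 ^ j + ideg (c k) ≠ 133 := by
  intro h133
  simp only [ideg, pow_add, Nat.reducePow] at h133
  have := Nat.two_pow_pos i
  have := Nat.two_pow_pos j
  have := Nat.two_pow_pos k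
  have hi : i < 8 := lt_eight_of_two_pow_le_133 (by omega)
  have hj : j < 8 := lt_eight_of_two_pow_le_133 (by omega)
  have hk : k < 8 := lt_eight_of_two_pow_le_133 (by omega)
  interval_cases i <;> interval_cases j <;> interval_cases k <;> omega

lemma ideg_add_ideg_ne_133 {g₁ g₂ : Gen} (h5 : hdeg g₁ + hdeg g₂ = 5) :
    ideg g₁ + ideg g₂ ≠ 133 := by
  have := hdeg_eq_one_or_three_or_four_or_five g₁
  have := hdeg_eq_one_or_three_or_four_or_five g₂
  rcases (by omega : hdeg g₁ = 1 ∧ hdeg g₂ = 4 ∨ hdeg g₂ = 1 ∧ hdeg g₁ = 4) with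
    ⟨h1, h4⟩ | ⟨h1, h4⟩
  all_goals
    obtain ⟨i, rfl⟩ := hdeg_eq_one_iff.1 h1
    have := two_pow_add_ideg_ne_133 h4 i
    simp only [ideg_h]
    omega

lemma ideg_add_ideg_add_ideg_ne_133 {g₁ g₂ g₃ : Gen} (h5 : hdeg g₁ + (hdeg g₂ + hdeg g₃) = 5) :
    ideg g₁ + (ideg g₂ + ideg g₃) ≠ 133 := by
  have := hdeg_eq_one_or_three_or_four_or_five g₁
  have := hdeg_eq_one_or_three_or_four_or_five g₂
  have := hdeg_eq_one_or_three_or_four_or_five g₃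
  rcases (by omega : hdeg g₁ = 3 ∧ hdeg g₂ = 1 ∧ hdeg g₃ = 1 ∨ hdeg g₂ = 3 ∧ hdeg g₁ = 1 ∧
      hdeg g₃ = 1 ∨ hdeg g₃ = 3 ∧ hdeg g₁ = 1 ∧ hdeg g₂ = 1) with
    ⟨h3, h1, h1'⟩ | ⟨h3, h1, h1'⟩ | ⟨h3, h1, h1'⟩
  all_goals
    obtain ⟨k, rfl⟩ := hdeg_eq_three_iff.1 h3
    obtain ⟨i, rfl⟩ := hdeg_eq_one_iff.1 h1
    obtain ⟨j, rfl⟩ := hdeg_eq_one_iff.1 h1'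
    have := two_pow_add_two_pow_add_ideg_c_ne_133 i j k
    simp only [ideg_h]
    omega

lemma exists_h_succ_mem_of_five {g₁ g₂ g₃ g₄ g₅ : Gen}
    (h5 : hdeg g₁ + (hdeg g₂ + (hdeg g₃ + (hdeg g₄ + hdeg g₅))) = 5)
    (h133 : ideg g₁ + (ideg g₂ + (ideg g₃ + (ideg g₄ + ideg g₅))) = 133) :
    ∃ i, h i ∈ [g₁, g₂, g₃, g₄, g₅] ∧ h (i + 1) ∈ [g₁, g₂, g₃, g₄, g₅] := by
  have := one_le_hdeg g₁
  have := one_le_hdeg g₂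
  have := one_le_hdeg g₃
  have := one_le_hdeg g₄
  have := one_le_hdeg g₅
  obtain ⟨i₁, rfl⟩ := hdeg_eq_one_iff.1 (by omega : hdeg g₁ = 1)
  obtain ⟨i₂, rfl⟩ := hdeg_eq_one_iff.1 (by omega : hdeg g₂ = 1)
  obtain ⟨i₃, rfl⟩ := hdeg_eq_one_iff.1 (by omega : hdeg g₃ = 1)
  obtain ⟨i₄, rfl⟩ := hdeg_eq_one_iff.1 (by omega : hdeg g₄ = 1)
  obtain ⟨i₅, rfl⟩ := hdeg_eq_one_iff.1 (by omega : hdeg g₅ = 1)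
  simp only [ideg_h] at h133
  obtain ⟨i, hi, hi'⟩ := exists_succ_mem_of_two_pow_sum_eq_133 (a := i₁) (b := i₂) (c := i₃)
    (d := i₄) (e := i₅) (by omega)
  exact ⟨i, by simpa using hi, by simpa using hi'⟩

lemma eq_J_zero_or_exists_h_succ_mem {l : List Gen} (h5 : (l.map hdeg).sum = 5)
    (h133 : (l.map ideg).sum = 133) : l = [J 0] ∨ ∃ i, h i ∈ l ∧ h (i + 1) ∈ l := by
  have hlen : l.length ≤ 5 := by
    simpa [h5] using List.length_le_sum_of_one_le (l.map hdeg)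
      (List.forall_mem_map.2 fun g _ ↦ one_le_hdeg g)
  rcases l with _ | ⟨g₁, _ | ⟨g₂, _ | ⟨g₃, _ | ⟨g₄, _ | ⟨g₅, _ | ⟨g₆, l⟩⟩⟩⟩⟩⟩
  all_goals simp only [List.map_cons, List.map_nil, List.sum_cons, List.sum_nil, add_zero,
    List.length_cons] at h5 h133 hlen
  · omega
  · exact .inl (by rw [eq_J_zero_of_hdeg_eq_five h5 h133])
  · exact absurd h133 (ideg_add_ideg_ne_133 h5)
  · exact absurd h133 (ideg_add_ideg_add_ideg_ne_133 h5)
  · have := hdeg_eq_one_or_three_or_four_or_five g₁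
    have := hdeg_eq_one_or_three_or_four_or_five g₂
    have := hdeg_eq_one_or_three_or_four_or_five g₃
    have := hdeg_eq_one_or_three_or_four_or_five g₄
    omega
  · exact .inr (exists_h_succ_mem_of_five h5 h133)
  · omega

end Gen

open Gen

lemma h_mul_h_succ_mem_relIdeal (i : ℕ) : (X (h i) * X (h (i + 1)) : P) ∈ relIdeal :=
  Ideal.subset_span (Set.mem_iUnion.2 ⟨i, Set.mem_insert _ _⟩)

lemma mkE_eq_zero_of_h_mul_h_succ_dvd {p : P} (i : ℕ) (hp : X (h i) * X (h (i + 1)) ∣ p) :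
    mkE p = 0 := by
  obtain ⟨q, rfl⟩ := hp
  exact Ideal.Quotient.eq_zero_iff_mem.2 (Ideal.mul_mem_right _ _ (h_mul_h_succ_mem_relIdeal i))

lemma relIdeal_le_ker_aeval {R : Type*} [CommRing R] [Algebra (ZMod 2) R] (v : Gen → R)
    (hv : ∀ i, v (h i) = 0) : relIdeal ≤ RingHom.ker (aeval v) := by
  rw [relIdeal, Ideal.span_le, rels, Set.iUnion_subset_iff]
  intro j
  simp [Set.insert_subset_iff, hv]

lemma mkE_X_J_zero_ne_zero : mkE (X (J 0)) ≠ 0 := by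
  intro hJ
  have hmem := relIdeal_le_ker_aeval (fun g ↦ if hdeg g = 1 then (0 : ZMod 2) else 1)
    (fun _ ↦ rfl) (Ideal.Quotient.eq_zero_iff_mem.1 hJ)
  simp [hdeg] at hmem

lemma mkE_monomial_mem_span_J_zero {s : Gen →₀ ℕ} (h5 : Finsupp.weight hdeg s = 5)
    (h133 : Finsupp.weight ideg s = 133) :
    mkE (monomial s 1) ∈ Submodule.span (ZMod 2) {mkE (X (J 0))} := by
  obtain ⟨l, hl⟩ : ∃ l : List Gen, (l : Multiset Gen) = s.toMultiset := Quot.exists_rep _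
  rw [Finsupp.weight_eq_sum_map_toMultiset, ← hl, Multiset.map_coe, Multiset.sum_coe] at h5 h133
  rw [monomial_one_eq_prod_map_X, ← hl, Multiset.map_coe, Multiset.prod_coe]
  rcases eq_J_zero_or_exists_h_succ_mem h5 h133 with rfl | ⟨i, hi, hi'⟩
  · simp [Submodule.mem_span_singleton_self]
  · rw [mkE_eq_zero_of_h_mul_h_succ_dvd i
      (List.mul_dvd_prod_map_of_mem X (by simp) hi hi')]
    exact zero_mem _

lemma component_le_of_forall_monomial_mem {k d : ℕ} {S : Submodule (ZMod 2) E'}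
    (hS : ∀ s : Gen →₀ ℕ, Finsupp.weight hdeg s = k → Finsupp.weight ideg s = d →
      mkE (monomial s 1) ∈ S) :
    component k d ≤ S := by
  rintro _ ⟨p, hp, rfl⟩
  obtain ⟨hk, hd⟩ := Submodule.mem_inf.1 hp
  rw [mem_weightedHomogeneousSubmodule] at hk hd
  change mkE p ∈ S
  rw [← support_sum_monomial_coeff p, map_sum]
  refine Submodule.sum_mem _ fun s hs ↦ ?_
  have hs' : coeff s p ≠ 0 := mem_support_iff.1 hs
  rw [← mul_one (coeff s p), ← smul_eq_mul, ← smul_monomial, map_smul]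
  exact S.smul_mem _ (hS s (hk hs') (hd hs'))

/-- `E′^{5,133}` is one-dimensional over `F₂` with basis the class of `J₀`; moreover
`h₀³h₁h₇ = h₀h₁²h₆² = h₀h₂h₅²h₆ = 0` in `E′`. -/
theorem stmt10 :
    component 5 133 = Submodule.span (ZMod 2) {mkE (X (Gen.J 0))} ∧
      mkE (X (Gen.J 0)) ≠ 0 ∧
      mkE (X (Gen.h 0) ^ 3 * X (Gen.h 1) * X (Gen.h 7)) = 0 ∧
      mkE (X (Gen.h 0) * X (Gen.h 1) ^ 2 * X (Gen.h 6) ^ 2) = 0 ∧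
      mkE (X (Gen.h 0) * X (Gen.h 2) * X (Gen.h 5) ^ 2 * X (Gen.h 6)) = 0 := by
  refine ⟨le_antisymm ?_ ?_, mkE_X_J_zero_ne_zero, ?_, ?_, ?_⟩
  · exact component_le_of_forall_monomial_mem fun s ↦ mkE_monomial_mem_span_J_zero
  · rw [Submodule.span_le, Set.singleton_subset_iff]
    refine ⟨X (J 0), Submodule.mem_inf.2 ⟨isWeightedHomogeneous_X _ _ _, ?_⟩, rfl⟩
    exact isWeightedHomogeneous_X (ZMod 2) ideg (J 0)
  · exact mkE_eq_zero_of_h_mul_h_succ_dvd 0 ⟨X (h 0) ^ 2 * X (h 7), by ring⟩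
  · exact mkE_eq_zero_of_h_mul_h_succ_dvd 0 ⟨X (h 1) * X (h 6) ^ 2, by ring⟩
  · exact mkE_eq_zero_of_h_mul_h_succ_dvd 5 ⟨X (h 0) * X (h 2) * X (h 5), by ring⟩
end
end
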